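/- Let k ≥ 4 be an integer, K := k - 3, and let φ be a satisfiable E3-CNF formula with m clauses C_1, …, C_m over variables x_1, …, x_n, with satisfying assignments α_start, α_end. Let y_1, …, y_K be K fresh variables and let ψ be the Ek-CNF formula over x_1,…,x_n,y_1,…,y_K whose clauses are C_j ∨ D for every j ∈ [m] and every clause D over y_1,…,y_K that contains each of y_1,…,y_K exactly once (positively or negatively). Define β_start (resp. β_end) as α_start (resp. α_end) extended by assigning 0 to every y_i. For any real ε > 0, if opt_φ(α_start ↔ α_end) < 1 - ε, then opt_ψ(β_start ↔ β_end) < 1 - ε/2^K. -/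

import Mathlib

/-!
Under an assignment `β`, the padded clause `C ∨ D` is violated exactly when `C` is violated by the
restriction of `β` to the original variables and `D` is the one sign pattern that `β` falsifies on
the fresh variables. So `ψ` has `2 ^ K` times as many clauses as `φ` but exactly as many violated
ones, i.e. `1 - val ψ β = (1 - val φ (β ∘ Sum.inl)) / 2 ^ K`. Restricting a reconfiguration
sequence for `ψ` to the original variables gives one for `φ`, so
`opt_ψ ≤ 1 - (1 - opt_φ) / 2 ^ K < 1 - ε / 2 ^ K`.
-/

/-- An assignment maps each Boolean variable to a truth value. -/
abbrev Assignment (V : Type) := V → Bool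

/-- A literal is a variable together with a polarity (`true` = positive);
a clause is a disjunction of literals, represented as the list of its literals
(its width is the length of this list). -/
abbrev Clause (V : Type) := List (V × Bool)

/-- A CNF formula is a conjunction of clauses, represented as a list
(clauses are counted with multiplicity). -/
abbrev CNF (V : Type) := List (Clause V)

/-- An assignment satisfies a clause if it makes at least one literal true. -/
def satClause {V : Type} (α : Assignment V) (C : Clause V) : Bool :=
  C.any fun l => α l.1 == l.2

/-- An assignment satisfies a CNF formula if it satisfies every clause. -/
def satCNF {V : Type} (α : Assignment V) (φ : CNF V) : Bool :=
  φ.all fun C => satClause α C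

/-- The fraction of clauses of `φ` satisfied by `α`. -/
noncomputable def val {V : Type} (φ : CNF V) (α : Assignment V) : ℝ :=
  ((φ.filter fun C => satClause α C).length : ℝ) / (φ.length : ℝ)

/-- The number of clauses of `φ` violated by `α`. -/
def numViol {V : Type} (φ : CNF V) (α : Assignment V) : ℕ :=
  (φ.filter fun C => !satClause α C).length

/-- Two assignments differ on at most one variable. -/
def Adjacent {V : Type} (α β : Assignment V) : Prop :=
  ∀ v w, α v ≠ β v → α w ≠ β w → v = w

/-- `seq` is a reconfiguration sequence from `s` to `e`: a nonempty finite sequence of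
assignments starting at `s`, ending at `e`, in which consecutive assignments differ
on at most one variable. -/
def IsReconfSeq {V : Type} (s e : Assignment V) (seq : List (Assignment V)) : Prop :=
  seq ≠ [] ∧ seq.head? = some s ∧ seq.getLast? = some e ∧ seq.Chain' Adjacent

/-- The value of a reconfiguration sequence: the minimum of `val φ` over its members. -/
noncomputable def seqVal {V : Type} (φ : CNF V) (seq : List (Assignment V)) : ℝ :=
  sInf (val φ '' {α | α ∈ seq})

/-- `opt_φ(s ↔ e)`: the optimal (maximum) value over all reconfiguration
sequences from `s` to `e`. -/
noncomputable def optVal {V : Type} (φ : CNF V) (s e : Assignment V) : ℝ :=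
  sSup (seqVal φ '' {seq | IsReconfSeq s e seq})

open Function

section Values

variable {V : Type} (φ : CNF V) (α : Assignment V)

@[simp]
lemma numViol_cons (C : Clause V) :
    numViol (C :: φ) α = numViol φ α + if satClause α C then 0 else 1 := by
  by_cases h : satClause α C <;> simp [numViol, h]

@[simp]
lemma numViol_append (φ' : CNF V) : numViol (φ ++ φ') α = numViol φ α + numViol φ' α := by
  simp [numViol, List.filter_append]

lemma val_nonneg : 0 ≤ val φ α := by
  unfold val; positivity

lemma val_le_one : val φ α ≤ 1 :=
  div_le_one_of_le₀ (mod_cast List.length_filter_le _ _) (Nat.cast_nonneg _)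

lemma one_sub_val (hφ : φ ≠ []) : 1 - val φ α = numViol φ α / φ.length := by
  have hlen : (φ.length : ℝ) ≠ 0 := by simpa using hφ
  have hsplit : (φ.length : ℝ) = (φ.filter fun C => satClause α C).length + numViol φ α := by
    exact_mod_cast List.length_eq_length_filter_add _
  rw [val, eq_div_iff hlen, sub_mul, div_mul_cancel₀ _ hlen]
  linarith

end Values

section SeqVal

variable {V : Type} (φ : CNF V)

lemma seqVal_le_val {seq : List (Assignment V)} {α : Assignment V} (h : α ∈ seq) :
    seqVal φ seq ≤ val φ α :=
  csInf_le ⟨0, by rintro _ ⟨β, -, rfl⟩; exact val_nonneg φ β⟩ ⟨α, h, rfl⟩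

lemma exists_mem_val_eq_seqVal {seq : List (Assignment V)} (h : seq ≠ []) :
    ∃ α ∈ seq, val φ α = seqVal φ seq :=
  (Set.Nonempty.csInf_mem ⟨_, _, List.head_mem h, rfl⟩ ((List.finite_toSet seq).image (val φ)) :
    seqVal φ seq ∈ val φ '' {α | α ∈ seq})

lemma optVal_nonneg (s e : Assignment V) : 0 ≤ optVal φ s e := by
  refine Real.sSup_nonneg ?_
  rintro _ ⟨seq, hseq, rfl⟩
  obtain ⟨α, -, hα⟩ := exists_mem_val_eq_seqVal φ hseq.1
  exact hα ▸ val_nonneg φ α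

lemma seqVal_le_optVal {s e : Assignment V} {seq : List (Assignment V)}
    (h : IsReconfSeq s e seq) : seqVal φ seq ≤ optVal φ s e := by
  refine le_csSup ⟨1, ?_⟩ ⟨seq, h, rfl⟩
  rintro _ ⟨seq', hseq', rfl⟩
  exact (seqVal_le_val φ (List.head_mem hseq'.1)).trans (val_le_one φ _)

end SeqVal

lemma Adjacent.comp {V W : Type} {f : V → W} (hf : Injective f) {α β : Assignment W}
    (h : Adjacent α β) : Adjacent (α ∘ f) (β ∘ f) :=
  fun v w hv hw => hf (h (f v) (f w) hv hw)

lemma IsReconfSeq.map_comp {V W : Type} {f : V → W} (hf : Injective f) {s e : Assignment W}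
    {seq : List (Assignment W)} (h : IsReconfSeq s e seq) :
    IsReconfSeq (s ∘ f) (e ∘ f) (seq.map (· ∘ f)) := by
  obtain ⟨hne, hhead, hlast, hchain⟩ := h
  exact ⟨by simpa using hne, by simp [List.head?_map, hhead], by simp [List.getLast?_map, hlast],
    List.isChain_map_of_isChain _ (fun _ _ h => h.comp hf) hchain⟩

/-- Every reconfiguration sequence for `ψ` restricts along `f` to one for `φ`, and the worst
assignment of the restricted sequence bounds the value of the original one. -/
lemma optVal_le_of_val_le {V W : Type} {φ : CNF V} {ψ : CNF W} {f : V → W} (hf : Injective f)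
    {F : ℝ → ℝ} (hF : Monotone F) (hF0 : 0 ≤ F 0) (h : ∀ β, val ψ β ≤ F (val φ (β ∘ f)))
    (s e : Assignment W) : optVal ψ s e ≤ F (optVal φ (s ∘ f) (e ∘ f)) := by
  refine Real.sSup_le ?_ (hF0.trans (hF (optVal_nonneg φ _ _)))
  rintro _ ⟨seq, hseq, rfl⟩
  obtain ⟨α, hα, hα_min⟩ := exists_mem_val_eq_seqVal φ (hseq.map_comp hf).1
  obtain ⟨β, hβ, rfl⟩ := List.mem_map.1 hα
  calc seqVal ψ seq ≤ val ψ β := seqVal_le_val ψ hβ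
    _ ≤ F (val φ (β ∘ f)) := h β
    _ = F (seqVal φ (seq.map (· ∘ f))) := by rw [hα_min]
    _ ≤ F (optVal φ (s ∘ f) (e ∘ f)) := hF (seqVal_le_optVal φ (hseq.map_comp hf))

section Padding

variable {V : Type} (K : ℕ)

def padClause (C : Clause V) (b : Fin K → Bool) : Clause (V ⊕ Fin K) :=
  C.map (fun l => (Sum.inl l.1, l.2)) ++ List.ofFn fun i => (Sum.inr i, b i)

noncomputable def padCNF (φ : CNF V) : CNF (V ⊕ Fin K) :=
  φ.flatMap fun C => (Finset.univ : Finset (Fin K → Bool)).toList.map (padClause K C)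

variable {K}

lemma satClause_padClause_eq_false_iff (β : Assignment (V ⊕ Fin K)) (C : Clause V)
    (b : Fin K → Bool) :
    satClause β (padClause K C b) = false ↔
      satClause (β ∘ Sum.inl) C = false ∧ b = fun i => !β (Sum.inr i) := by
  simp only [satClause, padClause, List.any_append, Bool.or_eq_false_iff, funext_iff]
  refine and_congr (by rw [List.any_map]; rfl) ?_
  simp only [List.any_eq_false, List.mem_ofFn, forall_exists_index, forall_apply_eq_imp_iff,
    beq_iff_eq]
  exact forall_congr' fun i => by cases b i <;> simp

lemma numViol_padClauses (β : Assignment (V ⊕ Fin K)) (C : Clause V) :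
    numViol ((Finset.univ : Finset (Fin K → Bool)).toList.map (padClause K C)) β =
      if satClause (β ∘ Sum.inl) C then 0 else 1 := by
  set c : Fin K → Bool := fun i => !β (Sum.inr i)
  have hviol : ∀ b, (!satClause β (padClause K C b)) = (!satClause (β ∘ Sum.inl) C && b == c) := by
    intro b
    rw [Bool.eq_iff_iff]
    simp [satClause_padClause_eq_false_iff, c]
  rw [numViol, List.filter_map, List.length_map, ← List.countP_eq_length_filter]
  rw [show (fun D => !satClause β D) ∘ padClause K C = _ from funext hviol]
  cases satClause (β ∘ Sum.inl) C
  · simpa [List.count] using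
      List.count_eq_one_of_mem (Finset.nodup_toList _) (Finset.mem_toList.2 (Finset.mem_univ c))
  · simp

lemma numViol_padCNF (φ : CNF V) (β : Assignment (V ⊕ Fin K)) :
    numViol (padCNF K φ) β = numViol φ (β ∘ Sum.inl) := by
  induction φ with
  | nil => rfl
  | cons C φ ih =>
    rw [padCNF, List.flatMap_cons, numViol_append, numViol_padClauses, ← padCNF, ih,
      numViol_cons, add_comm]

lemma length_padCNF (φ : CNF V) : (padCNF K φ).length = φ.length * 2 ^ K := by
  simp [padCNF, List.length_flatMap, Finset.card_univ]

lemma one_sub_val_padCNF {φ : CNF V} (hφ : φ ≠ []) (β : Assignment (V ⊕ Fin K)) :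
    1 - val (padCNF K φ) β = (1 - val φ (β ∘ Sum.inl)) / 2 ^ K := by
  have hpad : padCNF K φ ≠ [] := by
    simpa [← List.length_pos_iff, length_padCNF] using List.length_pos_iff.2 hφ
  rw [one_sub_val _ _ hpad, one_sub_val _ _ hφ, numViol_padCNF, length_padCNF]
  push_cast
  ring

-- Only `≤`: for `φ = []` both values are the junk `0 / 0 = 0`.
lemma val_padCNF_le (φ : CNF V) (β : Assignment (V ⊕ Fin K)) :
    val (padCNF K φ) β ≤ 1 - (1 - val φ (β ∘ Sum.inl)) / 2 ^ K := by
  rcases eq_or_ne φ [] with rfl | hφ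
  · simpa [padCNF, val] using inv_le_one_of_one_le₀ (one_le_pow₀ one_le_two)
  · linarith [one_sub_val_padCNF hφ β]

lemma optVal_padCNF_le (φ : CNF V) (s e : Assignment (V ⊕ Fin K)) :
    optVal (padCNF K φ) s e ≤ 1 - (1 - optVal φ (s ∘ Sum.inl) (e ∘ Sum.inl)) / 2 ^ K :=
  optVal_le_of_val_le Sum.inl_injective (F := fun x => 1 - (1 - x) / 2 ^ K)
    (fun x y hxy => by dsimp only; gcongr)
    (by simpa using inv_le_one_of_one_le₀ (one_le_pow₀ (one_le_two : (1 : ℝ) ≤ 2)))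
    (val_padCNF_le φ) s e

end Padding

theorem stmt9_general {n k : ℕ} (φ : CNF (Fin n))
    (αs αe : Assignment (Fin n))
    (ψ : CNF (Fin n ⊕ Fin (k - 3)))
    (hψ : ψ = φ.flatMap fun C =>
        (Finset.univ : Finset (Fin (k - 3) → Bool)).toList.map fun b =>
          C.map (fun l => (Sum.inl l.1, l.2)) ++ List.ofFn fun i => (Sum.inr i, b i))
    (βs βe : Assignment (Fin n ⊕ Fin (k - 3)))
    (hβs : βs = Sum.elim αs fun _ => false)
    (hβe : βe = Sum.elim αe fun _ => false)
    (ε : ℝ) :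
    optVal φ αs αe < 1 - ε → optVal ψ βs βe < 1 - ε / 2 ^ (k - 3) := by
  intro hopt
  obtain rfl : ψ = padCNF (k - 3) φ := hψ
  have hbound := optVal_padCNF_le φ βs βe
  subst hβs hβe
  rw [Sum.elim_comp_inl, Sum.elim_comp_inl] at hbound
  have hgap : ε / 2 ^ (k - 3) < (1 - optVal φ αs αe) / 2 ^ (k - 3) := by
    gcongr
    linarith
  linarith

/-- Soundness of the padding reduction from E3-SAT Reconfiguration to
Ek-SAT Reconfiguration (`k ≥ 4`, `K := k - 3`): with `ψ`, `βs`, `βe` as in the reduction,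
for any real `ε > 0`, if `opt_φ(αs ↔ αe) < 1 - ε` then `opt_ψ(βs ↔ βe) < 1 - ε/2^K`. -/
theorem stmt9 {n k : ℕ} (hk : 4 ≤ k) (φ : CNF (Fin n))
    (h3 : ∀ C ∈ φ, C.length = 3)
    (αs αe : Assignment (Fin n)) (hs : satCNF αs φ) (he : satCNF αe φ)
    (ψ : CNF (Fin n ⊕ Fin (k - 3)))
    (hψ : ψ = φ.flatMap fun C =>
        (Finset.univ : Finset (Fin (k - 3) → Bool)).toList.map fun b =>
          C.map (fun l => (Sum.inl l.1, l.2)) ++ List.ofFn fun i => (Sum.inr i, b i))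
    (βs βe : Assignment (Fin n ⊕ Fin (k - 3)))
    (hβs : βs = Sum.elim αs fun _ => false)
    (hβe : βe = Sum.elim αe fun _ => false)
    (ε : ℝ) (hε : 0 < ε) :
    optVal φ αs αe < 1 - ε → optVal ψ βs βe < 1 - ε / 2 ^ (k - 3) :=
  stmt9_general φ αs αe ψ hψ βs βe hβs hβe ε
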